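/- Let B be a tensored and cotensored V-category with finite limits and arbitrary class-indexed intersections of monomorphisms. Then (StrEpi_V B, Mono_V B) = (StrEpi B, Mono B) is a V-factorization system on B. -/

import Mathlib

/-!
An element `v ⟶ B(A, X)` is the same as a map `v ⊗ A ⟶ X` out of a tensor and as a map
`A ⟶ [v, X]` into a cotensor. With tensors, `V`-monos are therefore the ordinary monos; with
cotensors, epis are `V`-epis and strong epis are `V`-orthogonal to monos. Hence the ordinary
(strong epi, mono) factorization system, whose images are intersections of subobjects, is a
`V`-factorization system.
-/

open CategoryTheory CategoryTheory.Limits CategoryTheory.MonoidalCategory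

universe w v₁ v₂ v₃ v₄ u₁ u₂ u₃ u₄

namespace EnrichedFS

variable (V : Type u₁) [Category.{v₁} V] [MonoidalCategory V] [SymmetricCategory V]
  [MonoidalClosed V]
variable (B : Type u₂) [Category.{v₂} B] [EnrichedOrdinaryCategory V B]

/-- `e` is `V`-orthogonal to `m`: the square of hom-objects
with top `B(A₂,m)`, left `B(e,X₁)`, right `B(e,X₂)`, bottom `B(A₁,m)`
is a pullback in `V`. -/
def VOrth {A₁ A₂ X₁ X₂ : B} (e : A₁ ⟶ A₂) (m : X₁ ⟶ X₂) : Prop :=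
  IsPullback (eHomWhiskerLeft V A₂ m) (eHomWhiskerRight V e X₁)
    (eHomWhiskerRight V e X₂) (eHomWhiskerLeft V A₁ m)

/-- `H^{↓V}`: the class of morphisms to which every member of `H` is `V`-orthogonal. -/
def vRlp (H : MorphismProperty B) : MorphismProperty B :=
  fun _ _ m => ∀ ⦃A₁ A₂ : B⦄ (e : A₁ ⟶ A₂), H e → VOrth V B e m

/-- `M^{↑V}`: the class of morphisms which are `V`-orthogonal to every member of `M`. -/
def vLlp (M : MorphismProperty B) : MorphismProperty B :=
  fun _ _ e => ∀ ⦃X₁ X₂ : B⦄ (m : X₁ ⟶ X₂), M m → VOrth V B e m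

/-- ordinary orthogonality: unique diagonal fillers for every commutative square. -/
def OrdOrth {A₁ A₂ X₁ X₂ : B} (e : A₁ ⟶ A₂) (m : X₁ ⟶ X₂) : Prop :=
  ∀ (u : A₁ ⟶ X₁) (v : A₂ ⟶ X₂), u ≫ m = e ≫ v →
    ∃! d : A₂ ⟶ X₁, e ≫ d = u ∧ d ≫ m = v

/-- `H^{↓}` (ordinary). -/
def ordRlp (H : MorphismProperty B) : MorphismProperty B :=
  fun _ _ m => ∀ ⦃A₁ A₂ : B⦄ (e : A₁ ⟶ A₂), H e → OrdOrth B e m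

/-- `M^{↑}` (ordinary). -/
def ordLlp (M : MorphismProperty B) : MorphismProperty B :=
  fun _ _ e => ∀ ⦃X₁ X₂ : B⦄ (m : X₁ ⟶ X₂), M m → OrdOrth B e m

/-- `(E,M)` is a `V`-prefactorization system: `E^{↓V} = M` and `M^{↑V} = E`. -/
def IsVPrefactorization (E M : MorphismProperty B) : Prop :=
  vRlp V B E = M ∧ vLlp V B M = E

/-- `(E,M)` is an ordinary prefactorization system. -/
def IsOrdPrefactorization (E M : MorphismProperty B) : Prop :=
  ordRlp B E = M ∧ ordLlp B M = E

/-- every morphism factors as a morphism in `E` followed by a morphism in `M`. -/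
def FactorizationsExist (E M : MorphismProperty B) : Prop :=
  ∀ ⦃X Y : B⦄ (f : X ⟶ Y), ∃ (Z : B) (e : X ⟶ Z) (m : Z ⟶ Y), E e ∧ M m ∧ e ≫ m = f

/-- `(E,M)` is a `V`-factorization system. -/
def IsVFactorizationSystem (E M : MorphismProperty B) : Prop :=
  IsVPrefactorization V B E M ∧ FactorizationsExist B E M

/-- `(E,M)` is an ordinary factorization system. -/
def IsOrdFactorizationSystem (E M : MorphismProperty B) : Prop :=
  IsOrdPrefactorization B E M ∧ FactorizationsExist B E M

/-- intersection of two classes of morphisms. -/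
def interProp (M N : MorphismProperty B) : MorphismProperty B := fun _ _ f => M f ∧ N f

/-- `V`-monomorphisms. -/
def vMono : MorphismProperty B := fun _ _ m => ∀ A : B, Mono (eHomWhiskerLeft V A m)

/-- `V`-epimorphisms. -/
def vEpi : MorphismProperty B := fun _ _ e => ∀ A : B, Mono (eHomWhiskerRight V e A)

/-- `V`-strong monomorphisms. -/
def vStrongMono : MorphismProperty B := fun _ _ m =>
  vMono V B m ∧ ∀ ⦃A₁ A₂ : B⦄ (e : A₁ ⟶ A₂), vEpi V B e → VOrth V B e m

/-- `V`-strong epimorphisms. -/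
def vStrongEpi : MorphismProperty B := fun _ _ e =>
  vEpi V B e ∧ ∀ ⦃X₁ X₂ : B⦄ (m : X₁ ⟶ X₂), vMono V B m → VOrth V B e m

/-- ordinary monomorphisms, as a class. -/
def ordMono : MorphismProperty B := fun _ _ m => Mono m

/-- ordinary epimorphisms, as a class. -/
def ordEpi : MorphismProperty B := fun _ _ e => Epi e

/-- ordinary strong monomorphisms. -/
def ordStrongMono : MorphismProperty B := fun _ _ m =>
  Mono m ∧ ∀ ⦃A₁ A₂ : B⦄ (e : A₁ ⟶ A₂), Epi e → OrdOrth B e m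

/-- ordinary strong epimorphisms. -/
def ordStrongEpi : MorphismProperty B := fun _ _ e =>
  Epi e ∧ ∀ ⦃X₁ X₂ : B⦄ (m : X₁ ⟶ X₂), Mono m → OrdOrth B e m

/-- closure under composition with isomorphisms on either side. -/
def ClosedUnderIsoComp (E : MorphismProperty B) : Prop :=
  (∀ ⦃X Y Z : B⦄ (e : X ⟶ Y) (i : Y ⟶ Z), E e → IsIso i → E (e ≫ i)) ∧
  (∀ ⦃X Y Z : B⦄ (i : X ⟶ Y) (e : Y ⟶ Z), IsIso i → E e → E (i ≫ e))

/-- a commutative square which is a `V`-pullback: it is sent to a pullback square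
in `V` by every hom functor `B(A,-)`. -/
def IsVPullbackSq {P X Y Z : B} (p₁ : P ⟶ X) (p₂ : P ⟶ Y) (f : X ⟶ Z) (g : Y ⟶ Z) : Prop :=
  p₁ ≫ f = p₂ ≫ g ∧
    ∀ A : B, IsPullback (eHomWhiskerLeft V A p₁) (eHomWhiskerLeft V A p₂)
      (eHomWhiskerLeft V A f) (eHomWhiskerLeft V A g)

/-- a commutative square which is a `V`-pushout: it is sent to a pullback square
in `V` by every hom functor `B(-,A)`. -/
def IsVPushoutSq {X Y₁ Y₂ Q : B} (f₁ : X ⟶ Y₁) (f₂ : X ⟶ Y₂) (i₁ : Y₁ ⟶ Q) (i₂ : Y₂ ⟶ Q) :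
    Prop :=
  f₁ ≫ i₁ = f₂ ≫ i₂ ∧
    ∀ A : B, IsPullback (eHomWhiskerRight V i₁ A) (eHomWhiskerRight V i₂ A)
      (eHomWhiskerRight V f₁ A) (eHomWhiskerRight V f₂ A)

/-- `B` has `V`-kernel pairs. -/
def HasVKernelPairs : Prop :=
  ∀ ⦃X Y : B⦄ (f : X ⟶ Y), ∃ (P : B) (p₁ p₂ : P ⟶ X), IsVPullbackSq V B p₁ p₂ f f

/-- `B` has `V`-cokernel pairs. -/
def HasVCokernelPairs : Prop :=
  ∀ ⦃X Y : B⦄ (f : X ⟶ Y), ∃ (Q : B) (i₁ i₂ : Y ⟶ Q), IsVPushoutSq V B f f i₁ i₂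

/-- `m : P ⟶ C` is a `V`-fibre-product (`V`-wide-pullback) of the family `f i : X i ⟶ C`,
with projections `π i`. -/
def IsVFibreProduct {ι : Type w} {C : B} {X : ι → B} (f : ∀ i, X i ⟶ C)
    {P : B} (m : P ⟶ C) (π : ∀ i, P ⟶ X i) : Prop :=
  (∀ i, π i ≫ f i = m) ∧
    ∀ (A : B) (Z : V) (z : Z ⟶ (A ⟶[V] C)) (zi : ∀ i, Z ⟶ (A ⟶[V] X i)),
      (∀ i, zi i ≫ eHomWhiskerLeft V A (f i) = z) →
        ∃! t : Z ⟶ (A ⟶[V] P), t ≫ eHomWhiskerLeft V A m = z ∧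
          ∀ i, t ≫ eHomWhiskerLeft V A (π i) = zi i

/-- `m : P ⟶ C` is an ordinary fibre product (wide pullback) of the family `f i : X i ⟶ C`. -/
def OrdIsFibreProduct {ι : Type w} {C : B} {X : ι → B} (f : ∀ i, X i ⟶ C)
    {P : B} (m : P ⟶ C) (π : ∀ i, P ⟶ X i) : Prop :=
  (∀ i, π i ≫ f i = m) ∧
    ∀ ⦃W' : B⦄ (z : W' ⟶ C) (zi : ∀ i, W' ⟶ X i), (∀ i, zi i ≫ f i = z) →
      ∃! t : W' ⟶ P, t ≫ m = z ∧ ∀ i, t ≫ π i = zi i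

/-- a cone is a `V`-limit cone: it is sent to a limit cone in `V` by every `B(A,-)`. -/
def IsVLimitCone {J : Type u₃} [Category.{v₃} J] {D : J ⥤ B} (c : Cone D) : Prop :=
  ∀ (A : B) (Z : V) (z : ∀ j : J, Z ⟶ (A ⟶[V] D.obj j)),
    (∀ ⦃j j' : J⦄ (φ : j ⟶ j'), z j ≫ eHomWhiskerLeft V A (D.map φ) = z j') →
      ∃! t : Z ⟶ (A ⟶[V] c.pt), ∀ j, t ≫ eHomWhiskerLeft V A (c.π.app j) = z j

/-- a cocone is a `V`-colimit cocone: it is sent to a limit cone in `V` by every `B(-,A)`. -/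
def IsVColimitCocone {J : Type u₃} [Category.{v₃} J] {D : J ⥤ B} (c : Cocone D) : Prop :=
  ∀ (A : B) (Z : V) (z : ∀ j : J, Z ⟶ (D.obj j ⟶[V] A)),
    (∀ ⦃j j' : J⦄ (φ : j ⟶ j'), z j' ≫ eHomWhiskerRight V (D.map φ) A = z j) →
      ∃! t : Z ⟶ (c.pt ⟶[V] A), ∀ j, t ≫ eHomWhiskerRight V (c.ι.app j) A = z j

/-- `B` has small `V`-limits. -/
def HasSmallVLimits : Prop :=
  ∀ (J : Type v₂) [SmallCategory J] (D : J ⥤ B), ∃ c : Cone D, IsVLimitCone V B c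

/-- `B` has small `V`-colimits. -/
def HasSmallVColimits : Prop :=
  ∀ (J : Type v₂) [SmallCategory J] (D : J ⥤ B), ∃ c : Cocone D, IsVColimitCocone V B c

/-- `B` has finite `V`-limits. -/
def HasFiniteVLimits : Prop :=
  ∀ (J : Type) [SmallCategory J] [FinCategory J] (D : J ⥤ B),
    ∃ c : Cone D, IsVLimitCone V B c

/-- `B` is well-powered with respect to the class `M`: every object has,
up to isomorphism, only a set of `M`-subobjects. -/
def WellPoweredWrt (M : MorphismProperty B) : Prop :=
  ∀ X : B, ∃ (ι : Type v₂) (Y : ι → B) (f : ∀ i, Y i ⟶ X), (∀ i, M (f i)) ∧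
    ∀ ⦃Z : B⦄ (g : Z ⟶ X), M g → ∃ (i : ι) (h : Z ≅ Y i), h.hom ≫ f i = g

/-- `B` is co-well-powered with respect to the class `E`. -/
def CoWellPoweredWrt (E : MorphismProperty B) : Prop :=
  ∀ X : B, ∃ (ι : Type v₂) (Y : ι → B) (f : ∀ i, X ⟶ Y i), (∀ i, E (f i)) ∧
    ∀ ⦃Z : B⦄ (g : X ⟶ Z), E g → ∃ (i : ι) (h : Y i ≅ Z), f i ≫ h.hom = g

/-- comparison morphism `B(T, X) ⟶ [v, B(A, X)]` in `V` induced by a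
unit `η : v ⟶ B(A, T)`, where `T` is a candidate tensor `v ⊗ A`. -/
def tensorComparison {v : V} {A T : B} (η : v ⟶ (A ⟶[V] T)) (X : B) :
    (T ⟶[V] X) ⟶ (ihom v).obj (A ⟶[V] X) :=
  MonoidalClosed.curry (eComp V A T X) ≫ (MonoidalClosed.pre η).app (A ⟶[V] X)

/-- `η : v ⟶ B(A,T)` exhibits `T` as a tensor `v ⊗ A` in the enriched sense. -/
def IsTensorUnit (v : V) (A T : B) (η : v ⟶ (A ⟶[V] T)) : Prop :=
  ∀ X : B, IsIso (tensorComparison V B η X)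

/-- `B` is tensored over `V`. -/
def Tensored : Prop :=
  ∀ (v : V) (A : B), ∃ (T : B) (η : v ⟶ (A ⟶[V] T)), IsTensorUnit V B v A T η

/-- `E` is closed under tensors: whenever tensors exist, `v ⊗ e` lies in `E` for `e ∈ E`. -/
def ClosedUnderTensors (E : MorphismProperty B) : Prop :=
  ∀ (v : V) ⦃A₁ A₂ : B⦄ (e : A₁ ⟶ A₂) {T₁ T₂ : B}
    (η₁ : v ⟶ (A₁ ⟶[V] T₁)) (η₂ : v ⟶ (A₂ ⟶[V] T₂)),
    IsTensorUnit V B v A₁ T₁ η₁ → IsTensorUnit V B v A₂ T₂ η₂ → E e →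
      ∀ t : T₁ ⟶ T₂, η₁ ≫ eHomWhiskerLeft V A₁ t = η₂ ≫ eHomWhiskerRight V e T₂ → E t

/-- comparison morphism `B(A, C) ⟶ [v, B(A, X)]` in `V` induced by a
counit `ε : v ⟶ B(C, X)`, where `C` is a candidate cotensor `[v, X]`. -/
def cotensorComparison {v : V} {C X : B} (ε : v ⟶ (C ⟶[V] X)) (A : B) :
    (A ⟶[V] C) ⟶ (ihom v).obj (A ⟶[V] X) :=
  MonoidalClosed.curry ((β_ (C ⟶[V] X) (A ⟶[V] C)).hom ≫ eComp V A C X) ≫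
    (MonoidalClosed.pre ε).app (A ⟶[V] X)

/-- `ε : v ⟶ B(C,X)` exhibits `C` as a cotensor `[v, X]` in the enriched sense. -/
def IsCotensorCounit (v : V) (X C : B) (ε : v ⟶ (C ⟶[V] X)) : Prop :=
  ∀ A : B, IsIso (cotensorComparison V B ε A)

/-- `B` is cotensored over `V`. -/
def Cotensored : Prop :=
  ∀ (v : V) (X : B), ∃ (C : B) (ε : v ⟶ (C ⟶[V] X)), IsCotensorCounit V B v X C ε

/-- `M` is closed under cotensors: `[v, m]` lies in `M` for `m ∈ M`. -/
def ClosedUnderCotensors (M : MorphismProperty B) : Prop :=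
  ∀ (v : V) ⦃X₁ X₂ : B⦄ (m : X₁ ⟶ X₂) {C₁ C₂ : B}
    (ε₁ : v ⟶ (C₁ ⟶[V] X₁)) (ε₂ : v ⟶ (C₂ ⟶[V] X₂)),
    IsCotensorCounit V B v X₁ C₁ ε₁ → IsCotensorCounit V B v X₂ C₂ ε₂ → M m →
      ∀ t : C₁ ⟶ C₂, ε₁ ≫ eHomWhiskerLeft V C₁ m = ε₂ ≫ eHomWhiskerRight V t X₂ → M t

/-- a `V`-functor from a `V`-category `J` to an enriched ordinary category `D`. -/
structure VFunctor (J : Type u₃) [EnrichedCategory V J]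
    (D : Type u₄) [Category.{v₄} D] [EnrichedOrdinaryCategory V D] where
  obj : J → D
  emap : ∀ X Y : J, (X ⟶[V] Y) ⟶ (obj X ⟶[V] obj Y)
  emap_id : ∀ X : J, eId V X ≫ emap X X = eId V (obj X)
  emap_comp : ∀ X Y Z : J,
    eComp V X Y Z ≫ emap X Z = (emap X Y ⊗ₘ emap Y Z) ≫ eComp V (obj X) (obj Y) (obj Z)

/-- the underlying action of a `V`-functor on ordinary morphisms. -/
def VFunctor.map' {J : Type u₃} [Category.{v₃} J] [EnrichedOrdinaryCategory V J]
    {D : Type u₄} [Category.{v₄} D] [EnrichedOrdinaryCategory V D]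
    (F : VFunctor V J D) {X Y : J} (f : X ⟶ Y) : F.obj X ⟶ F.obj Y :=
  (eHomEquiv V).symm (eHomEquiv V f ≫ F.emap X Y)

/-- a `V`-adjunction `F ⊣ G`, given by a `V`-natural isomorphism
`D(F A, X) ≅ A(A, G X)` of hom-objects. -/
structure VAdjunction {A : Type u₃} [Category.{v₃} A] [EnrichedOrdinaryCategory V A]
    {D : Type u₄} [Category.{v₄} D] [EnrichedOrdinaryCategory V D]
    (F : VFunctor V A D) (G : VFunctor V D A) where
  iso : ∀ (X : A) (Y : D), (F.obj X ⟶[V] Y) ≅ (X ⟶[V] G.obj Y)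
  nat_right : ∀ (X : A) (Y Y' : D),
    eComp V (F.obj X) Y Y' ≫ (iso X Y').hom =
      ((iso X Y).hom ⊗ₘ G.emap Y Y') ≫ eComp V X (G.obj Y) (G.obj Y')
  nat_left : ∀ (X X' : A) (Y : D),
    (F.emap X X' ▷ (F.obj X' ⟶[V] Y)) ≫ eComp V (F.obj X) (F.obj X') Y ≫ (iso X Y).hom =
      ((X ⟶[V] X') ◁ (iso X' Y).hom) ≫ eComp V X X' (G.obj Y)

/-- a `V`-functor `J → V` (a weight), presented by its uncurried action. -/
structure VWeight (J : Type u₃) [EnrichedCategory V J] where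
  obj : J → V
  act : ∀ j j' : J, obj j ⊗ (j ⟶[V] j') ⟶ obj j'
  act_id : ∀ j : J, (obj j ◁ eId V j) ≫ act j j = (ρ_ (obj j)).hom
  act_comp : ∀ j j' j'' : J,
    (α_ (obj j) (j ⟶[V] j') (j' ⟶[V] j'')).inv ≫ (act j j' ▷ (j' ⟶[V] j'')) ≫ act j' j'' =
      (obj j ◁ eComp V j j' j'') ≫ act j j''

/-- a `V`-natural transformation between `V`-functors. -/
structure VNatTrans {J : Type u₃} [EnrichedCategory V J]
    {D : Type u₄} [Category.{v₄} D] [EnrichedOrdinaryCategory V D]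
    (F G : VFunctor V J D) where
  app : ∀ j : J, F.obj j ⟶ G.obj j
  naturality : ∀ j j' : J,
    F.emap j j' ≫ eHomWhiskerLeft V (F.obj j) (app j') =
      G.emap j j' ≫ eHomWhiskerRight V (app j) (G.obj j')

/-- `cone` exhibits `L` as the `V`-enriched weighted (indexed) limit `[W, F]`. -/
structure IsWeightedLimit {J : Type u₃} [EnrichedCategory V J]
    {D : Type u₄} [Category.{v₄} D] [EnrichedOrdinaryCategory V D]
    (W : VWeight V J) (F : VFunctor V J D) (L : D)
    (cone : ∀ j : J, W.obj j ⟶ (L ⟶[V] F.obj j)) : Prop where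
  natural : ∀ j j' : J,
    W.act j j' ≫ cone j' =
      (cone j ▷ (j ⟶[V] j')) ≫ ((L ⟶[V] F.obj j) ◁ F.emap j j') ≫
        eComp V L (F.obj j) (F.obj j')
  universal : ∀ (A : D) (Z : V) (μ : ∀ j : J, Z ⊗ W.obj j ⟶ (A ⟶[V] F.obj j)),
    (∀ j j' : J,
      (Z ◁ W.act j j') ≫ μ j' =
        (α_ Z (W.obj j) (j ⟶[V] j')).inv ≫ (μ j ▷ (j ⟶[V] j')) ≫
          ((A ⟶[V] F.obj j) ◁ F.emap j j') ≫ eComp V A (F.obj j) (F.obj j')) →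
      ∃! t : Z ⟶ (A ⟶[V] L), ∀ j : J,
        (t ▷ W.obj j) ≫ ((A ⟶[V] L) ◁ cone j) ≫ eComp V A L (F.obj j) = μ j

/-- `B` is `V`-finitely-well-complete: it has finite `V`-limits and `V`-intersections
of arbitrary class-indexed families of `V`-strong monomorphisms. -/
def VFinitelyWellComplete : Prop :=
  HasFiniteVLimits V B ∧
    ∀ {ι : Type (max u₂ v₂)} {C : B} (X : ι → B) (f : ∀ i, X i ⟶ C),
      (∀ i, vStrongMono V B (f i)) →
        ∃ (P : B) (m : P ⟶ C) (π : ∀ i, P ⟶ X i), IsVFibreProduct V B f m π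

/-- `B` is finitely well-complete (ordinary sense): it has finite limits and
intersections of arbitrary class-indexed families of strong monomorphisms. -/
def OrdFinitelyWellComplete : Prop :=
  HasFiniteLimits B ∧
    ∀ {ι : Type (max u₂ v₂)} {C : B} (X : ι → B) (f : ∀ i, X i ⟶ C),
      (∀ i, ordStrongMono B (f i)) →
        ∃ (P : B) (m : P ⟶ C) (π : ∀ i, P ⟶ X i), OrdIsFibreProduct B f m π

end EnrichedFS

namespace EnrichedFS

section Ordinary

variable (C : Type u₃) [Category.{v₃} C]

def HasIntersectionsOfMonos : Prop :=
  ∀ {ι : Type (max u₃ v₃)} {Y : C} (X : ι → C) (f : ∀ i, X i ⟶ Y), (∀ i, Mono (f i)) →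
    ∃ (P : C) (m : P ⟶ Y) (π : ∀ i, P ⟶ X i), OrdIsFibreProduct C f m π

variable {C}

lemma isPullback_iff_forall_existsUnique {P X Y Z : C}
    {fst : P ⟶ X} {snd : P ⟶ Y} {f : X ⟶ Z} {g : Y ⟶ Z} (w : fst ≫ f = snd ≫ g) :
    IsPullback fst snd f g ↔ ∀ (W : C) (x : W ⟶ X) (y : W ⟶ Y), x ≫ f = y ≫ g →
      ∃! t : W ⟶ P, t ≫ fst = x ∧ t ≫ snd = y := by
  constructor
  · intro h W x y hxy
    exact ⟨h.lift x y hxy, ⟨h.lift_fst x y hxy, h.lift_snd x y hxy⟩,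
      fun t ⟨ht₁, ht₂⟩ => h.hom_ext (by rw [ht₁, h.lift_fst]) (by rw [ht₂, h.lift_snd])⟩
  · intro H
    choose t ht htu using fun s : PullbackCone f g => H s.pt s.fst s.snd s.condition
    exact IsPullback.of_isLimit (PullbackCone.IsLimit.mk w t (fun s => (ht s).1)
      (fun s => (ht s).2) (fun s t' h₁ h₂ => htu s t' ⟨h₁, h₂⟩))

lemma OrdIsFibreProduct.mono {ι : Type w} {Y : C} {X : ι → C} {f : ∀ i, X i ⟶ Y}
    [∀ i, Mono (f i)] {P : C} {m : P ⟶ Y} {π : ∀ i, P ⟶ X i}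
    (h : OrdIsFibreProduct C f m π) : Mono m := by
  refine ⟨fun {W} a b hab => ?_⟩
  have hπ : ∀ i, a ≫ π i = b ≫ π i := fun i => by
    rw [← cancel_mono (f i), Category.assoc, Category.assoc, h.1 i, hab]
  obtain ⟨t, -, htu⟩ := h.2 (b ≫ m) (fun i => b ≫ π i) (fun i => by rw [Category.assoc, h.1 i])
  exact (htu a ⟨hab, hπ⟩).trans (htu b ⟨rfl, fun _ => rfl⟩).symm

/-- The image of `f` is the intersection of all subobjects through which `f` factors. -/
lemma hasImages_of_hasIntersectionsOfMonos (hint : HasIntersectionsOfMonos C) :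
    HasImages C where
  has_image {X Y} f := by
    obtain ⟨P, m, π, h⟩ := hint (fun F : MonoFactorisation f => F.I) (fun F => F.m)
      (fun F => F.m_mono)
    have : Mono m := h.mono
    obtain ⟨e, ⟨he, -⟩, -⟩ := h.2 f (fun F => F.e) (fun F => F.fac)
    exact ⟨⟨{ F := { I := P, m := m, e := e, fac := he }
              isImage := { lift := π, lift_fac := h.1 } }⟩⟩

lemma ordStrongEpi_of_strongEpi {A₁ A₂ : C} (e : A₁ ⟶ A₂) [StrongEpi e] : ordStrongEpi C e := by
  refine ⟨inferInstance, fun X₁ X₂ n _ u v huv => ?_⟩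
  have sq : CommSq u e n v := ⟨huv⟩
  exact ⟨sq.lift, ⟨sq.fac_left, sq.fac_right⟩,
    fun d ⟨hd, _⟩ => (cancel_epi e).1 (hd.trans sq.fac_left.symm)⟩

lemma factorizationsExist_ordStrongEpi_ordMono [HasFiniteLimits C]
    (hint : HasIntersectionsOfMonos C) :
    FactorizationsExist C (ordStrongEpi C) (ordMono C) := by
  have := hasImages_of_hasIntersectionsOfMonos hint
  intro X Y f
  exact ⟨image f, factorThruImage f, image.ι f, ordStrongEpi_of_strongEpi _,
    (inferInstance : Mono _), image.fac f⟩

lemma ordLlp_ordMono_eq_ordStrongEpi [HasEqualizers C] :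
    ordLlp C (ordMono C) = ordStrongEpi C := by
  ext A₁ A₂ e
  refine ⟨fun he => ⟨⟨fun {W} a b hab => ?_⟩, he⟩, fun he => he.2⟩
  obtain ⟨d, ⟨-, hd⟩, -⟩ := he (equalizer.ι a b) (inferInstance : Mono _)
    (equalizer.lift e hab) (𝟙 A₂) (by rw [equalizer.lift_ι, Category.comp_id])
  rw [← Category.id_comp a, ← Category.id_comp b, ← hd, Category.assoc, Category.assoc,
    equalizer.condition]

lemma ordRlp_eq_ordMono {E : MorphismProperty C} (hE : E ≤ ordLlp C (ordMono C))
    (hfact : FactorizationsExist C E (ordMono C)) : ordRlp C E = ordMono C := by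
  ext X₁ X₂ m
  refine ⟨fun hm => ?_, fun hm A₁ A₂ e he => hE e he m hm⟩
  obtain ⟨Z, e, m', he, hm', rfl⟩ := hfact m
  obtain ⟨d, ⟨hd, -⟩, -⟩ := hm e he (𝟙 X₁) m' (Category.id_comp _)
  have : Mono m' := hm'
  have : Mono e := mono_of_mono_fac hd
  exact mono_comp e m'

lemma isOrdFactorizationSystem_ordStrongEpi_ordMono [HasFiniteLimits C]
    (hint : HasIntersectionsOfMonos C) :
    IsOrdFactorizationSystem C (ordStrongEpi C) (ordMono C) :=
  have hfact := factorizationsExist_ordStrongEpi_ordMono hint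
  ⟨⟨ordRlp_eq_ordMono (fun _ _ _ he => he.2) hfact, ordLlp_ordMono_eq_ordStrongEpi⟩, hfact⟩

end Ordinary

section Enriched

variable (V : Type u₁) [Category.{v₁} V] [MonoidalCategory V]
  {B : Type u₂} [Category.{v₂} B] [EnrichedOrdinaryCategory V B]

lemma eHomEquiv_comp_eq_comp_eHomWhiskerLeft {X Y Z : B} (f : X ⟶ Y) (g : Y ⟶ Z) :
    eHomEquiv V (f ≫ g) = eHomEquiv V f ≫ eHomWhiskerLeft V X g := by
  rw [eHomEquiv_comp, eHomWhiskerLeft, MonoidalCategory.tensorHom_def, unitors_inv_equal,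
    Category.assoc, ← rightUnitor_inv_naturality_assoc]

lemma eHomEquiv_comp_eq_comp_eHomWhiskerRight {X Y Z : B} (f : X ⟶ Y) (g : Y ⟶ Z) :
    eHomEquiv V (f ≫ g) = eHomEquiv V g ≫ eHomWhiskerRight V f Z := by
  rw [eHomEquiv_comp, eHomWhiskerRight, MonoidalCategory.tensorHom_def',
    Category.assoc, ← leftUnitor_inv_naturality_assoc]

variable {V}

lemma mono_of_vMono {X₁ X₂ : B} {m : X₁ ⟶ X₂} (hm : vMono V B m) : Mono m := by
  refine ⟨fun {W} a b hab => (eHomEquiv V).injective ?_⟩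
  have := hm W
  rw [← cancel_mono (eHomWhiskerLeft V W m), ← eHomEquiv_comp_eq_comp_eHomWhiskerLeft,
    ← eHomEquiv_comp_eq_comp_eHomWhiskerLeft, hab]

lemma ordOrth_of_vOrth {A₁ A₂ X₁ X₂ : B} {e : A₁ ⟶ A₂} {m : X₁ ⟶ X₂}
    (h : VOrth V B e m) : OrdOrth B e m := by
  intro u v huv
  have H := (isPullback_iff_forall_existsUnique (eHom_whisker_exchange V e m)).1 h (𝟙_ V)
    (eHomEquiv V v) (eHomEquiv V u) (by
      rw [← eHomEquiv_comp_eq_comp_eHomWhiskerRight, ← eHomEquiv_comp_eq_comp_eHomWhiskerLeft,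
        huv])
  refine ((eHomEquiv V).existsUnique_congr fun d => ?_).2 H
  rw [← eHomEquiv_comp_eq_comp_eHomWhiskerLeft, ← eHomEquiv_comp_eq_comp_eHomWhiskerRight,
    (eHomEquiv V).apply_eq_iff_eq, (eHomEquiv V).apply_eq_iff_eq, and_comm]

lemma vRlp_le_ordRlp (H : MorphismProperty B) : vRlp V B H ≤ ordRlp B H :=
  fun _ _ _ hm _ _ e he => ordOrth_of_vOrth (hm e he)

lemma vLlp_le_ordLlp (M : MorphismProperty B) : vLlp V B M ≤ ordLlp B M :=
  fun _ _ _ he _ _ m hm => ordOrth_of_vOrth (he m hm)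

lemma isVFactorizationSystem_of_isOrdFactorizationSystem {E M : MorphismProperty B}
    (h : IsOrdFactorizationSystem B E M)
    (horth : ∀ ⦃A₁ A₂ X₁ X₂ : B⦄ (e : A₁ ⟶ A₂) (m : X₁ ⟶ X₂), E e → M m → VOrth V B e m) :
    IsVFactorizationSystem V B E M := by
  obtain ⟨⟨hRlp, hLlp⟩, hfact⟩ := h
  refine ⟨⟨le_antisymm ?_ fun _ _ m hm _ _ e he => horth e m he hm,
    le_antisymm ?_ fun _ _ e he _ _ m hm => horth e m he hm⟩, hfact⟩
  · exact hRlp ▸ vRlp_le_ordRlp E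
  · exact hLlp ▸ vLlp_le_ordLlp M

variable [MonoidalClosed V]

lemma uncurry'_eHomEquiv_comp_tensorComparison {v : V} {A T : B} (η : v ⟶ (A ⟶[V] T)) {X : B}
    (t : T ⟶ X) :
    MonoidalClosed.uncurry' (eHomEquiv V t ≫ tensorComparison V B η X) =
      η ≫ eHomWhiskerLeft V A t := by
  rw [MonoidalClosed.uncurry', tensorComparison, ← Category.assoc (eHomEquiv V t),
    MonoidalClosed.uncurry_natural_left, MonoidalClosed.uncurry_pre, whisker_exchange_assoc,
    ← MonoidalClosed.uncurry_eq, MonoidalClosed.uncurry_natural_left,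
    MonoidalClosed.uncurry_curry, eHomWhiskerLeft, ← rightUnitor_inv_naturality_assoc]

noncomputable def IsTensorUnit.homEquiv {v : V} {A T : B} {η : v ⟶ (A ⟶[V] T)}
    (h : IsTensorUnit V B v A T η) (X : B) : (T ⟶ X) ≃ (v ⟶ (A ⟶[V] X)) :=
  have := h X
  (eHomEquiv V).trans
    ((asIso (tensorComparison V B η X)).homToEquiv.trans MonoidalClosed.curryHomEquiv'.symm)

lemma IsTensorUnit.homEquiv_apply {v : V} {A T : B} {η : v ⟶ (A ⟶[V] T)}
    (h : IsTensorUnit V B v A T η) {X : B} (t : T ⟶ X) :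
    h.homEquiv X t = η ≫ eHomWhiskerLeft V A t :=
  uncurry'_eHomEquiv_comp_tensorComparison η t

lemma IsTensorUnit.homEquiv_comp {v : V} {A T : B} {η : v ⟶ (A ⟶[V] T)}
    (h : IsTensorUnit V B v A T η) {X Y : B} (t : T ⟶ X) (g : X ⟶ Y) :
    h.homEquiv Y (t ≫ g) = h.homEquiv X t ≫ eHomWhiskerLeft V A g := by
  rw [h.homEquiv_apply, h.homEquiv_apply, eHomWhiskerLeft_comp, Category.assoc]

lemma vMono_of_mono (ht : Tensored V B) {X₁ X₂ : B} (m : X₁ ⟶ X₂) [Mono m] : vMono V B m := by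
  refine fun A => ⟨fun {v} a b hab => ?_⟩
  obtain ⟨T, η, hT⟩ := ht v A
  obtain ⟨s, rfl⟩ := (hT.homEquiv X₁).surjective a
  obtain ⟨s', rfl⟩ := (hT.homEquiv X₁).surjective b
  rw [← hT.homEquiv_comp, ← hT.homEquiv_comp, (hT.homEquiv X₂).apply_eq_iff_eq,
    cancel_mono] at hab
  rw [hab]

lemma vMono_eq_ordMono (ht : Tensored V B) : vMono V B = ordMono B := by
  ext X₁ X₂ m
  exact ⟨mono_of_vMono, fun (_ : Mono m) => vMono_of_mono ht m⟩

variable [SymmetricCategory V]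

lemma uncurry'_eHomEquiv_comp_cotensorComparison {v : V} {C X : B} (ε : v ⟶ (C ⟶[V] X))
    {A : B} (t : A ⟶ C) :
    MonoidalClosed.uncurry' (eHomEquiv V t ≫ cotensorComparison V B ε A) =
      ε ≫ eHomWhiskerRight V t X := by
  rw [MonoidalClosed.uncurry', cotensorComparison, ← Category.assoc (eHomEquiv V t),
    MonoidalClosed.uncurry_natural_left, MonoidalClosed.uncurry_pre, whisker_exchange_assoc,
    ← MonoidalClosed.uncurry_eq, MonoidalClosed.uncurry_natural_left,
    MonoidalClosed.uncurry_curry, eHomWhiskerRight, ← rightUnitor_inv_naturality_assoc,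
    BraidedCategory.braiding_naturality_right_assoc, rightUnitor_inv_braiding_assoc]

noncomputable def IsCotensorCounit.homEquiv {v : V} {X C : B} {ε : v ⟶ (C ⟶[V] X)}
    (h : IsCotensorCounit V B v X C ε) (A : B) : (A ⟶ C) ≃ (v ⟶ (A ⟶[V] X)) :=
  have := h A
  (eHomEquiv V).trans
    ((asIso (cotensorComparison V B ε A)).homToEquiv.trans MonoidalClosed.curryHomEquiv'.symm)

lemma IsCotensorCounit.homEquiv_apply {v : V} {X C : B} {ε : v ⟶ (C ⟶[V] X)}
    (h : IsCotensorCounit V B v X C ε) {A : B} (t : A ⟶ C) :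
    h.homEquiv A t = ε ≫ eHomWhiskerRight V t X :=
  uncurry'_eHomEquiv_comp_cotensorComparison ε t

lemma IsCotensorCounit.homEquiv_comp {v : V} {X C : B} {ε : v ⟶ (C ⟶[V] X)}
    (h : IsCotensorCounit V B v X C ε) {A A' : B} (f : A' ⟶ A) (t : A ⟶ C) :
    h.homEquiv A' (f ≫ t) = h.homEquiv A t ≫ eHomWhiskerRight V f X := by
  rw [h.homEquiv_apply, h.homEquiv_apply, eHomWhiskerRight_comp, Category.assoc]

/-- The cotensor `[v, m] : [v, X₁] ⟶ [v, X₂]` of `m`, characterised on elements. -/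
lemma IsCotensorCounit.exists_map {v : V} {X₁ X₂ C₁ C₂ : B} {ε₁ : v ⟶ (C₁ ⟶[V] X₁)}
    {ε₂ : v ⟶ (C₂ ⟶[V] X₂)} (h₁ : IsCotensorCounit V B v X₁ C₁ ε₁)
    (h₂ : IsCotensorCounit V B v X₂ C₂ ε₂) (m : X₁ ⟶ X₂) :
    ∃ m' : C₁ ⟶ C₂, ∀ {A : B} (t : A ⟶ C₁),
      h₂.homEquiv A (t ≫ m') = h₁.homEquiv A t ≫ eHomWhiskerLeft V A m := by
  obtain ⟨m', hm'⟩ := (h₂.homEquiv C₁).surjective (ε₁ ≫ eHomWhiskerLeft V C₁ m)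
  refine ⟨m', fun t => ?_⟩
  rw [h₂.homEquiv_comp, hm', h₁.homEquiv_apply, Category.assoc, Category.assoc,
    eHom_whisker_exchange]

lemma vEpi_of_epi (hc : Cotensored V B) {A₁ A₂ : B} (e : A₁ ⟶ A₂) [Epi e] : vEpi V B e := by
  refine fun X => ⟨fun {v} a b hab => ?_⟩
  obtain ⟨C, ε, hC⟩ := hc v X
  obtain ⟨s, rfl⟩ := (hC.homEquiv A₂).surjective a
  obtain ⟨s', rfl⟩ := (hC.homEquiv A₂).surjective b
  rw [← hC.homEquiv_comp, ← hC.homEquiv_comp, (hC.homEquiv A₁).apply_eq_iff_eq,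
    cancel_epi] at hab
  rw [hab]

/-- On `v`-elements, the `V`-orthogonality square of `e` and `m` is the ordinary orthogonality
square of `e` and the cotensor `[v, m]`, which is again a monomorphism. -/
lemma vOrth_of_ordLlp_of_vMono (hc : Cotensored V B) {A₁ A₂ X₁ X₂ : B} {e : A₁ ⟶ A₂} {m : X₁ ⟶ X₂}
    (he : ordLlp B (ordMono B) e) (hm : vMono V B m) : VOrth V B e m := by
  refine (isPullback_iff_forall_existsUnique (eHom_whisker_exchange V e m)).2
    fun v x y hxy => ?_
  obtain ⟨C₁, ε₁, h₁⟩ := hc v X₁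
  obtain ⟨C₂, ε₂, h₂⟩ := hc v X₂
  obtain ⟨m', hm'⟩ := h₁.exists_map h₂ m
  have hm'_mono : Mono m' := ⟨fun {A} s s' hss => (h₁.homEquiv A).injective <| by
    have := hm A
    rw [← cancel_mono (eHomWhiskerLeft V A m), ← hm', ← hm', hss]⟩
  obtain ⟨q, rfl⟩ := (h₂.homEquiv A₂).surjective x
  obtain ⟨p, rfl⟩ := (h₁.homEquiv A₁).surjective y
  rw [← h₂.homEquiv_comp, ← hm', (h₂.homEquiv A₁).apply_eq_iff_eq] at hxy
  refine ((h₁.homEquiv A₂).existsUnique_congr fun d => ?_).1 (he m' hm'_mono p q hxy.symm)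
  rw [← hm', ← h₁.homEquiv_comp, (h₂.homEquiv A₂).apply_eq_iff_eq,
    (h₁.homEquiv A₁).apply_eq_iff_eq, and_comm]

end Enriched

variable (V : Type u₁) [Category.{v₁} V] [MonoidalCategory V] [SymmetricCategory V]
  [MonoidalClosed V]
variable (B : Type u₂) [Category.{v₂} B] [EnrichedOrdinaryCategory V B]

/-- If `B` is tensored and cotensored with finite limits and arbitrary class-indexed
intersections of monomorphisms, then `(StrEpi_V B, Mono_V B) = (StrEpi B, Mono B)`
is a `V`-factorization system. -/
theorem stmt18 (ht : Tensored V B) (hc : Cotensored V B) (hfl : HasFiniteLimits B)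
    (hint : ∀ {ι : Type (max u₂ v₂)} {C : B} (X : ι → B) (f : ∀ i, X i ⟶ C),
      (∀ i, Mono (f i)) →
        ∃ (P : B) (m : P ⟶ C) (π : ∀ i, P ⟶ X i), OrdIsFibreProduct B f m π) :
    vStrongEpi V B = ordStrongEpi B ∧ vMono V B = ordMono B ∧
      IsVFactorizationSystem V B (vStrongEpi V B) (vMono V B) := by
  have := hfl
  have hM : vMono V B = ordMono B := vMono_eq_ordMono ht
  have hV : IsVFactorizationSystem V B (ordStrongEpi B) (ordMono B) :=
    isVFactorizationSystem_of_isOrdFactorizationSystem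
      (isOrdFactorizationSystem_ordStrongEpi_ordMono @hint)
      fun _ _ _ _ _ m he hm => vOrth_of_ordLlp_of_vMono hc he.2 (hM ▸ hm : vMono V B m)
  have hSE : vStrongEpi V B = ordStrongEpi B := by
    ext A₁ A₂ e
    have hLlp : vLlp V B (vMono V B) e ↔ ordStrongEpi B e := by rw [hM, hV.1.2]
    exact ⟨fun he => hLlp.1 he.2, fun he => ⟨have := he.1; vEpi_of_epi hc e, hLlp.2 he⟩⟩
  rw [hSE, hM]
  exact ⟨rfl, rfl, hV⟩

end EnrichedFS
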